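/- Let F : ℝᵈ → ℝ be differentiable with L-Lipschitz gradient and bounded below by F_inf. Consider the inexact gradient iteration Θ^{t+1} = Θ^t − η·Ĝ^t where Ĝ^t = ∇F(Θ^t) + e^t with ‖e^t‖² ≤ ε² for all t, and step size η = 1/(3L). Then (1/T)·∑_{t=0}^{T−1} ‖∇F(Θ^t)‖² ≤ 3(F(Θ⁰) − F_inf)/(η·T) + 3ε². -/

import Mathlib

/-!
A Lipschitz gradient gives the descent inequality `F y ≤ F x + ⟪∇F x, y - x⟫ + L‖y - x‖²`.
For a step `y = x - η (∇F x + e)` with `Lη ≤ 1/2` the quadratic term is absorbed by the polar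
identity `‖g + e‖² - 2⟪g, g + e⟫ = ‖e‖² - ‖g‖²`, so every step decreases `F` by at least
`η/2 (‖∇F x‖² - ‖e‖²)`. Telescoping over `T` steps and using `F ≥ F_inf` bounds the sum of the
squared gradients, and `η = 1/(3L)` satisfies `Lη ≤ 1/2`.
-/

open InnerProductSpace Metric
open scoped Gradient

section InexactGradientDescent

variable {E : Type*} [NormedAddCommGroup E] [InnerProductSpace ℝ E] [CompleteSpace E]
  {F : E → ℝ} {L η : ℝ}

-- The constant `L` instead of the sharp `L / 2` comes from the mean value inequality alone.
theorem le_add_inner_gradient_add_mul_norm_sq (hL : 0 ≤ L) (hdiff : Differentiable ℝ F)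
    (hLip : ∀ x y, ‖∇ F x - ∇ F y‖ ≤ L * ‖x - y‖) (x y : E) :
    F y ≤ F x + inner ℝ (∇ F x) (y - x) + L * ‖y - x‖ ^ 2 := by
  have bound : ∀ z ∈ closedBall x ‖y - x‖, ‖fderiv ℝ F z - fderiv ℝ F x‖ ≤ L * ‖y - x‖ := by
    intro z hz
    rw [← toDual_gradient, ← toDual_gradient, ← map_sub, LinearIsometryEquiv.norm_map]
    exact (hLip z x).trans (mul_le_mul_of_nonneg_left (mem_closedBall_iff_norm.1 hz) hL)
  have hmv := (convex_closedBall x ‖y - x‖).norm_image_sub_le_of_norm_fderiv_le'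
    (fun z _ => hdiff z) bound (mem_closedBall_self (norm_nonneg _))
    (mem_closedBall_iff_norm.2 le_rfl)
  rw [← toDual_gradient, toDual_apply_apply, Real.norm_eq_abs] at hmv
  linarith [(le_abs_self _).trans hmv]

theorem le_sub_mul_norm_sq_of_inexact_gradient_step (hL : 0 ≤ L) (hdiff : Differentiable ℝ F)
    (hLip : ∀ x y, ‖∇ F x - ∇ F y‖ ≤ L * ‖x - y‖) (hη : 0 ≤ η) (hLη : L * η ≤ 1 / 2) (x e : E) :
    F (x - η • (∇ F x + e)) ≤ F x - η / 2 * (‖∇ F x‖ ^ 2 - ‖e‖ ^ 2) := by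
  set g := ∇ F x
  have hdesc := le_add_inner_gradient_add_mul_norm_sq hL hdiff hLip x (x - η • (g + e))
  rw [sub_sub_cancel_left, inner_neg_right, inner_smul_right, norm_neg, norm_smul,
    Real.norm_of_nonneg hη] at hdesc
  have hpolar : ‖g + e‖ ^ 2 - 2 * inner ℝ g (g + e) = ‖e‖ ^ 2 - ‖g‖ ^ 2 := by
    rw [norm_add_sq_real, inner_add_right, real_inner_self_eq_norm_sq]; ring
  have hquad : L * (η * ‖g + e‖) ^ 2 ≤ η / 2 * ‖g + e‖ ^ 2 := by
    have := mul_le_mul_of_nonneg_right hLη (mul_nonneg hη (sq_nonneg ‖g + e‖))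
    nlinarith
  nlinarith

theorem sum_norm_sq_gradient_le_of_inexact_gradient_descent {ε m : ℝ} (hL : 0 ≤ L)
    (hdiff : Differentiable ℝ F) (hLip : ∀ x y, ‖∇ F x - ∇ F y‖ ≤ L * ‖x - y‖)
    (hbelow : ∀ x, m ≤ F x) (hη : 0 < η) (hLη : L * η ≤ 1 / 2) {x e : ℕ → E}
    (he : ∀ t, ‖e t‖ ^ 2 ≤ ε ^ 2) (hupd : ∀ t, x (t + 1) = x t - η • (∇ F (x t) + e t))
    (T : ℕ) :
    ∑ t ∈ Finset.range T, ‖∇ F (x t)‖ ^ 2 ≤ 2 * (F (x 0) - m) / η + T * ε ^ 2 := by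
  have hstep (t : ℕ) : η / 2 * (‖∇ F (x t)‖ ^ 2 - ε ^ 2) ≤ F (x t) - F (x (t + 1)) := by
    have := le_sub_mul_norm_sq_of_inexact_gradient_step hL hdiff hLip hη.le hLη (x t) (e t)
    rw [← hupd] at this
    nlinarith [he t]
  have hsum : η / 2 * (∑ t ∈ Finset.range T, ‖∇ F (x t)‖ ^ 2 - T * ε ^ 2) ≤ F (x 0) - m :=
    calc η / 2 * (∑ t ∈ Finset.range T, ‖∇ F (x t)‖ ^ 2 - T * ε ^ 2)
        = ∑ t ∈ Finset.range T, η / 2 * (‖∇ F (x t)‖ ^ 2 - ε ^ 2) := by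
          simp only [Finset.mul_sum, mul_sub, Finset.sum_sub_distrib, Finset.sum_const,
            Finset.card_range, nsmul_eq_mul]
          ring
      _ ≤ ∑ t ∈ Finset.range T, (F (x t) - F (x (t + 1))) := Finset.sum_le_sum fun t _ => hstep t
      _ = F (x 0) - F (x T) := Finset.sum_range_sub' (fun t => F (x t)) T
      _ ≤ F (x 0) - m := sub_le_sub_left (hbelow _) _
  rw [div_add' _ _ _ hη.ne', le_div_iff₀ hη]
  linarith

end InexactGradientDescent

theorem inexact_gd_convergence_general {d : ℕ} (L ε η Finf : ℝ) (hL : 0 < L)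
    (F : EuclideanSpace ℝ (Fin d) → ℝ)
    (hdiff : Differentiable ℝ F)
    (hLip : ∀ x y, ‖gradient F x - gradient F y‖ ≤ L * ‖x - y‖)
    (hbelow : ∀ x, Finf ≤ F x)
    (T : ℕ)
    (Θ : ℕ → EuclideanSpace ℝ (Fin d))
    (Ghat e : ℕ → EuclideanSpace ℝ (Fin d))
    (hG : ∀ t, Ghat t = gradient F (Θ t) + e t)
    (he : ∀ t, ‖e t‖ ^ 2 ≤ ε ^ 2)
    (hη : η = 1 / (3 * L))
    (hupd : ∀ t, Θ (t + 1) = Θ t - η • Ghat t) :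
    (1 / (T : ℝ)) * ∑ t ∈ Finset.range T, ‖gradient F (Θ t)‖ ^ 2 ≤
      3 * (F (Θ 0) - Finf) / (η * T) + 3 * ε ^ 2 := by
  have hηpos : 0 < η := by rw [hη]; positivity
  have hLη : L * η ≤ 1 / 2 := by rw [hη, mul_one_div, div_le_iff₀ (by positivity)]; linarith
  have hS := sum_norm_sq_gradient_le_of_inexact_gradient_descent hL.le hdiff hLip hbelow hηpos
    hLη he (fun t => (hupd t).trans (by rw [hG])) T
  rcases T.eq_zero_or_pos with rfl | hT
  · simpa using sq_nonneg ε
  have hT : (0 : ℝ) < T := by exact_mod_cast hT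
  have hgap : 0 ≤ F (Θ 0) - Finf := sub_nonneg.2 (hbelow _)
  rw [one_div_mul_eq_div, div_le_iff₀ hT]
  calc ∑ t ∈ Finset.range T, ‖∇ F (Θ t)‖ ^ 2
      ≤ 2 * (F (Θ 0) - Finf) / η + T * ε ^ 2 := hS
    _ ≤ 3 * (F (Θ 0) - Finf) / η + T * (3 * ε ^ 2) := by gcongr <;> linarith [sq_nonneg ε]
    _ = (3 * (F (Θ 0) - Finf) / (η * T) + 3 * ε ^ 2) * T := by field_simp

theorem inexact_gd_convergence {d : ℕ} (L ε η Finf : ℝ) (hL : 0 < L)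
    (F : EuclideanSpace ℝ (Fin d) → ℝ)
    (hdiff : Differentiable ℝ F)
    (hLip : ∀ x y, ‖gradient F x - gradient F y‖ ≤ L * ‖x - y‖)
    (hbelow : ∀ x, Finf ≤ F x)
    (T : ℕ) (hT : 0 < T)
    (Θ : ℕ → EuclideanSpace ℝ (Fin d))
    (Ghat e : ℕ → EuclideanSpace ℝ (Fin d))
    (hG : ∀ t, Ghat t = gradient F (Θ t) + e t)
    (he : ∀ t, ‖e t‖ ^ 2 ≤ ε ^ 2)
    (hη : η = 1 / (3 * L))
    (hupd : ∀ t, Θ (t + 1) = Θ t - η • Ghat t) :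
    (1 / (T : ℝ)) * ∑ t ∈ Finset.range T, ‖gradient F (Θ t)‖ ^ 2 ≤
      3 * (F (Θ 0) - Finf) / (η * T) + 3 * ε ^ 2 :=
  inexact_gd_convergence_general L ε η Finf hL F hdiff hLip hbelow T Θ Ghat e hG he hη hupd
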